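/- arXiv:1607.04055 — 2 statements merged into one kernel-verified Lean document; each statement's English description precedes it below -/
import Mathlib

section
/- If T is a consistent, recursively axiomatizable extension of PA, then the Gödel sentence G of T (satisfying T ⊢ G ↔ ¬Pr_T(⌜G⌝)) is not provable in T, assuming the provability predicate Pr_T satisfies Σ₁-completeness (T ⊢ φ implies T ⊢ Pr_T(⌜φ⌝)). -/
/-- An abstract framework for first-order arithmetic: sentences, formulas (one
free variable), theories, provability, truth in the standard model ℕ,
Gödel numbering, and the standard syntactic classes Σ₁, Π₁, Σ₂. -/
structure ArithSys where
  Sentence : Type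
  Formula : Type
  Theory : Type
  /-- provability: `Prv T φ` means `T ⊢ φ` -/
  Prv : Theory → Sentence → Prop
  /-- truth in the standard model: `TrueN φ` means `ℕ ⊨ φ` -/
  TrueN : Sentence → Prop
  neg : Sentence → Sentence
  conj : Sentence → Sentence → Sentence
  impl : Sentence → Sentence → Sentence
  biim : Sentence → Sentence → Sentence
  /-- the sentence `0 = 1` -/
  bot : Sentence
  /-- Gödel numbering of sentences -/
  gnum : Sentence → ℕ
  /-- `appN F n` is the sentence `F(n̄)` -/
  appN : Formula → ℕ → Sentence
  /-- `exQ F` is the sentence `∃x F(x)` -/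
  exQ : Formula → Sentence
  negF : Formula → Formula
  /-- `eqF n` is the formula `x = n̄` -/
  eqF : ℕ → Formula
  /-- `prF T` is the provability predicate `Pr_T(x)` of the theory `T` -/
  prF : Theory → Formula
  /-- Peano Arithmetic -/
  PA : Theory
  /-- `add T φ` is the theory `T + φ` -/
  add : Theory → Sentence → Theory
  Extends : Theory → Theory → Prop
  /-- recursively axiomatizable -/
  RecAx : Theory → Prop
  Sigma1 : Sentence → Prop
  Pi1 : Sentence → Prop
  Sigma2 : Sentence → Prop
  Pi1F : Formula → Prop
  -- truth in ℕ commutes with the connectives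
  true_neg : ∀ φ, TrueN (neg φ) ↔ ¬ TrueN φ
  true_conj : ∀ φ ψ, TrueN (conj φ ψ) ↔ (TrueN φ ∧ TrueN ψ)
  true_impl : ∀ φ ψ, TrueN (impl φ ψ) ↔ (TrueN φ → TrueN ψ)
  true_biim : ∀ φ ψ, TrueN (biim φ ψ) ↔ (TrueN φ ↔ TrueN ψ)
  true_bot : ¬ TrueN bot
  true_eqF : ∀ n m, TrueN (appN (eqF n) m) ↔ m = n
  negF_appN : ∀ F n, appN (negF F) n = neg (appN F n)
  -- provability is closed under propositional logic
  mp : ∀ {T φ ψ}, Prv T (impl φ ψ) → Prv T φ → Prv T ψ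
  biim_mp : ∀ {T φ ψ}, Prv T (biim φ ψ) → Prv T φ → Prv T ψ
  biim_mpr : ∀ {T φ ψ}, Prv T (biim φ ψ) → Prv T ψ → Prv T φ
  biim_intro : ∀ {T φ ψ}, Prv T (impl φ ψ) → Prv T (impl ψ φ) → Prv T (biim φ ψ)
  conj_intro : ∀ {T φ ψ}, Prv T φ → Prv T ψ → Prv T (conj φ ψ)
  conj_left : ∀ {T φ ψ}, Prv T (conj φ ψ) → Prv T φ
  conj_right : ∀ {T φ ψ}, Prv T (conj φ ψ) → Prv T ψ
  negE : ∀ {T φ}, Prv T φ → Prv T (neg φ) → Prv T bot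
  explosion : ∀ {T φ}, Prv T bot → Prv T φ
  neg_of_imp_bot : ∀ {T φ}, Prv T (impl φ bot) → Prv T (neg φ)
  imp_bot_of_neg : ∀ {T φ}, Prv T (neg φ) → Prv T (impl φ bot)
  -- theories and extensions
  extends_refl : ∀ T, Extends T T
  extends_trans : ∀ {T S U}, Extends T S → Extends S U → Extends T U
  prv_mono : ∀ {T S φ}, Extends T S → Prv S φ → Prv T φ
  add_extends : ∀ T φ, Extends (add T φ) T
  add_self : ∀ T φ, Prv (add T φ) φ
  deduction : ∀ {T φ ψ}, Prv (add T φ) ψ ↔ Prv T (impl φ ψ)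
  recax_pa : RecAx PA
  recax_add : ∀ {T φ}, RecAx T → RecAx (add T φ)
  -- arithmetic facts provable in every extension of PA
  eqF_prv : ∀ {T}, Extends T PA → ∀ n, Prv T (appN (eqF n) n)
  -- syntactic classes
  sigma1_neg_pi1 : ∀ {φ}, Pi1 φ → Sigma1 (neg φ)
  pi1_bot : Pi1 bot
  pi1_appN : ∀ {F}, Pi1F F → ∀ n, Pi1 (appN F n)
  sigma2_of_pi1 : ∀ {φ}, Pi1 φ → Sigma2 φ
  sigma2_of_sigma1 : ∀ {φ}, Sigma1 φ → Sigma2 φ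
  sigma2_biim_pi1 : ∀ {φ ψ}, Pi1 φ → Pi1 ψ → Sigma2 (biim φ ψ)

namespace ArithSys

variable (P : ArithSys)

/-- `F(⌜A⌝)` -/
def app (F : P.Formula) (A : P.Sentence) : P.Sentence := P.appN F (P.gnum A)

/-- the sentence `Pr_T(⌜A⌝)` -/
def pr (T : P.Theory) (A : P.Sentence) : P.Sentence := P.app (P.prF T) A

/-- `Con(T) := ¬Pr_T(⌜0=1⌝)` -/
def con (T : P.Theory) : P.Sentence := P.neg (P.pr T P.bot)

/-- `T` is consistent: `T ⊬ 0=1` -/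
def Consistent (T : P.Theory) : Prop := ¬ P.Prv T P.bot

/-- ω-consistency: for no formula `F(x)` does `T` prove `∃x F(x)` together
with `¬F(n̄)` for every numeral `n̄`. -/
def OmegaCon (T : P.Theory) : Prop :=
  ¬ ∃ F : P.Formula, P.Prv T (P.exQ F) ∧ ∀ n : ℕ, P.Prv T (P.neg (P.appN F n))

/-- `Pr_T` is a standard provability predicate: `ℕ ⊨ Pr_T(⌜φ⌝)` iff `T ⊢ φ`. -/
def StdPr (T : P.Theory) : Prop := ∀ φ, P.TrueN (P.pr T φ) ↔ P.Prv T φ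

/-- derivability condition D1 (Σ₁-completeness for provability) -/
def D1 (T : P.Theory) : Prop := ∀ φ, P.Prv T φ → P.Prv T (P.pr T φ)

/-- derivability condition D2 -/
def D2 (T : P.Theory) : Prop :=
  ∀ φ ψ, P.Prv T (P.impl (P.pr T (P.impl φ ψ)) (P.impl (P.pr T φ) (P.pr T ψ)))

/-- derivability condition D3 -/
def D3 (T : P.Theory) : Prop :=
  ∀ φ, P.Prv T (P.impl (P.pr T φ) (P.pr T (P.pr T φ)))

/-- Löb's theorem for `T` -/
def Loeb (T : P.Theory) : Prop :=
  ∀ φ, P.Prv T (P.impl (P.pr T φ) φ) → P.Prv T φ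

/-- provable Σ₁-completeness: every true Σ₁-sentence is provable -/
def Sigma1Complete (T : P.Theory) : Prop :=
  ∀ φ, P.Sigma1 φ → P.TrueN φ → P.Prv T φ

end ArithSys

/-- If `T` is a consistent, recursively axiomatizable extension of
PA, then a Gödel sentence `G` of `T` (i.e. `T ⊢ G ↔ ¬Pr_T(⌜G⌝)`) is not
provable in `T`, assuming `Pr_T` satisfies D1. -/
theorem godel_sentence_unprovable (P : ArithSys) (T : P.Theory) (G : P.Sentence)
    (hext : P.Extends T P.PA) (hrec : P.RecAx T) (hcon : P.Consistent T)
    (hD1 : P.D1 T)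
    (hG : P.Prv T (P.biim G (P.neg (P.pr T G)))) :
    ¬ P.Prv T G := by
  intro hpg
  exact hcon (P.negE (hD1 G hpg) (P.biim_mp hG hpg))
end

section
/- Let S = PA + ¬Con(PA). For any true Σ₁-sentence σ, the sentence σ' := Con(S) ∧ σ satisfies S ⊢ σ' ↔ ¬Pr_S(⌜σ'⌝). -/
section Aux

variable {P : ArithSys}

private lemma lift' {T : P.Theory} {φ ψ : P.Sentence} (h : P.Prv T ψ) :
    P.Prv (P.add T φ) ψ := P.prv_mono (P.add_extends T φ) h

private lemma imp_trans' {T : P.Theory} {a b c : P.Sentence}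
    (h1 : P.Prv T (P.impl a b)) (h2 : P.Prv T (P.impl b c)) :
    P.Prv T (P.impl a c) :=
  P.deduction.mp (P.mp (lift' h2) (P.mp (lift' h1) (P.add_self T a)))

/-- internal necessitation of a provable implication -/
private lemma prov_imp {T : P.Theory} (hD1 : P.D1 T) (hD2 : P.D2 T)
    {φ ψ : P.Sentence} (h : P.Prv T (P.impl φ ψ)) :
    P.Prv T (P.impl (P.pr T φ) (P.pr T ψ)) :=
  P.mp (hD2 φ ψ) (hD1 _ h)

/-- formalized Löb's theorem, derived from external Löb -/
private lemma formal_loeb {T : P.Theory} (hD2 : P.D2 T) (hD3 : P.D3 T)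
    (hLoeb : P.Loeb T) (A : P.Sentence) :
    P.Prv T (P.impl (P.pr T (P.impl (P.pr T A) A)) (P.pr T A)) := by
  set X := P.impl (P.pr T A) A with hX
  set L := P.impl (P.pr T X) (P.pr T A) with hL
  apply hLoeb
  apply P.deduction.mp
  apply P.deduction.mp
  -- work in T2 = add (add T (pr L)) (pr X); goal: pr A
  set T2 := P.add (P.add T (P.pr T L)) (P.pr T X)
  have hprL : P.Prv T2 (P.pr T L) := lift' (P.add_self _ _)
  have hprX : P.Prv T2 (P.pr T X) := P.add_self _ _
  have hprprX : P.Prv T2 (P.pr T (P.pr T X)) :=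
    P.mp (lift' (lift' (hD3 X))) hprX
  have hprprA : P.Prv T2 (P.pr T (P.pr T A)) :=
    P.mp (P.mp (lift' (lift' (hD2 (P.pr T X) (P.pr T A)))) hprL) hprprX
  exact P.mp (P.mp (lift' (lift' (hD2 (P.pr T A) A))) hprX) hprprA

end Aux

/-- for `S = PA + ¬Con(PA)` and any true Σ₁-sentence `σ`,
the sentence `σ' := Con(S) ∧ σ` satisfies `S ⊢ σ' ↔ ¬Pr_S(⌜σ'⌝)`. -/
theorem conS_and_sigma_is_godel_sentence (P : ArithSys)
    (σ : P.Sentence) (hσ1 : P.Sigma1 σ) (hσt : P.TrueN σ)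
    (S : P.Theory) (hS : S = P.add P.PA (P.neg (P.con P.PA)))
    (hD1 : P.D1 S) (hD2 : P.D2 S) (hD3 : P.D3 S)
    (hLoeb : P.Loeb S) (hSig : P.Sigma1Complete S) :
    P.Prv S (P.biim (P.conj (P.con S) σ)
      (P.neg (P.pr S (P.conj (P.con S) σ)))) := by
  subst hS
  set S := P.add P.PA (P.neg (P.con P.PA)) with hSdef
  -- notation
  set σ' := P.conj (P.con S) σ with hσ'
  -- S proves σ
  have hσS : P.Prv S σ := hSig σ hσ1 hσt
  -- S ⊢ Con S → (Pr ⊥ → ⊥)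
  have hCX : P.Prv S (P.impl (P.con S) (P.impl (P.pr S P.bot) P.bot)) :=
    P.deduction.mp (P.imp_bot_of_neg (P.add_self _ _))
  -- formalized Löb at ⊥ : S ⊢ Pr(Pr ⊥ → ⊥) → Pr ⊥
  have hFL : P.Prv S (P.impl (P.pr S (P.impl (P.pr S P.bot) P.bot)) (P.pr S P.bot)) :=
    formal_loeb hD2 hD3 hLoeb P.bot
  -- S ⊢ Pr(Con S) → Pr ⊥  (formalized Gödel II)
  have hGII : P.Prv S (P.impl (P.pr S (P.con S)) (P.pr S P.bot)) :=
    imp_trans' (prov_imp hD1 hD2 hCX) hFL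
  -- S ⊢ σ' → Con S
  have hσ'C : P.Prv S (P.impl σ' (P.con S)) :=
    P.deduction.mp (P.conj_left (P.add_self _ _))
  -- S ⊢ Pr σ' → Pr ⊥
  have hPσ'bot : P.Prv S (P.impl (P.pr S σ') (P.pr S P.bot)) :=
    imp_trans' (prov_imp hD1 hD2 hσ'C) hGII
  -- S ⊢ ⊥ → σ'
  have hbotσ' : P.Prv S (P.impl P.bot σ') :=
    P.deduction.mp (P.explosion (P.add_self _ _))
  -- S ⊢ Pr ⊥ → Pr σ'
  have hPbotσ' : P.Prv S (P.impl (P.pr S P.bot) (P.pr S σ')) :=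
    prov_imp hD1 hD2 hbotσ'
  apply P.biim_intro
  · -- σ' → ¬Pr σ'
    apply P.deduction.mp
    apply P.neg_of_imp_bot
    apply P.deduction.mp
    set T2 := P.add (P.add S σ') (P.pr S σ')
    have hC : P.Prv T2 (P.con S) := lift' (P.conj_left (P.add_self _ _))
    have hPbot : P.Prv T2 (P.pr S P.bot) :=
      P.mp (lift' (lift' hPσ'bot)) (P.add_self _ _)
    exact P.negE hPbot hC
  · -- ¬Pr σ' → σ'
    apply P.deduction.mp
    set T1 := P.add S (P.neg (P.pr S σ'))
    have hconS : P.Prv T1 (P.con S) := by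
      apply P.neg_of_imp_bot
      apply P.deduction.mp
      set T2 := P.add T1 (P.pr S P.bot)
      have hPσ' : P.Prv T2 (P.pr S σ') :=
        P.mp (lift' (lift' hPbotσ')) (P.add_self _ _)
      exact P.negE hPσ' (lift' (P.add_self _ _))
    exact P.conj_intro hconS (lift' hσS)
end
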